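/- arXiv:2012.09975 — 3 statements merged into one kernel-verified Lean document; each statement's English description precedes it below -/
import Mathlib

section
/- Define Γ as the set {r⁻ | r ∈ (0,1]} ∪ {q° | q ∈ [0,1]∩ℚ} with the unique total order having 0° as bottom, satisfying r* < s* iff r < s (for stars in {⁻,°}), and q⁻ < q° with no element strictly in between for each rational q ∈ (0,1]. Then Γ is a complete lattice. -/
open scoped Classical

/-- The carrier of the "doubled unit interval" `Γ`: pairs `(r, b)` ordered
lexicographically, where `b = true` represents an exact value `r°`
(which must be rational) and `b = false` represents an approximation `r⁻`
(which must satisfy `r > 0`). -/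
def GammaCarrier : Set (Lex (ℝ × Bool)) :=
  {p | 0 ≤ (ofLex p).1 ∧ (ofLex p).1 ≤ 1 ∧
    ((ofLex p).2 = true → ∃ q : ℚ, (q : ℝ) = (ofLex p).1) ∧
    ((ofLex p).2 = false → 0 < (ofLex p).1)}

/-- The doubled unit interval `Γ`, with the (total) order inherited from the
lexicographic product: `r* < s*` iff `r < s`, and `q⁻ < q°` immediately. -/
abbrev Gamma : Type := {p : Lex (ℝ × Bool) // p ∈ GammaCarrier}

theorem mem_gammaCarrier {a : ℝ} {b : Bool} (h1 : 0 ≤ a) (h2 : a ≤ 1)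
    (h3 : b = true → ∃ q : ℚ, (q : ℝ) = a) (h4 : b = false → 0 < a) :
    toLex (a, b) ∈ GammaCarrier := ⟨h1, h2, h3, h4⟩

/-- The underlying real number of an element of `Γ` (the map `γ`). -/
def γmap (x : Gamma) : ℝ := (ofLex x.1).1

/-- An element of `Γ` is exact iff it is of `°`-type. -/
def gexact (x : Gamma) : Prop := (ofLex x.1).2 = true

theorem gmem (x : Gamma) : 0 ≤ (ofLex x.1).1 ∧ (ofLex x.1).1 ≤ 1 ∧
    ((ofLex x.1).2 = true → ∃ q : ℚ, (q : ℝ) = (ofLex x.1).1) ∧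
    ((ofLex x.1).2 = false → 0 < (ofLex x.1).1) := x.2

/-- Smart constructor for `Γ`: clamps `r` into `[0,1]`, and produces the exact
value `r°` if `e = true` and `r` is rational (or `r = 0`), and `r⁻` otherwise. -/
noncomputable def mk' (r : ℝ) (e : Bool) : Gamma :=
  if h : (e = true ∧ ∃ q : ℚ, (q : ℝ) = max 0 (min 1 r)) ∨ max 0 (min 1 r) = 0 then
    ⟨toLex (max 0 (min 1 r), true),
      mem_gammaCarrier (le_max_left 0 _) (max_le zero_le_one (min_le_left 1 r))
        (fun _ => h.elim (fun h' => h'.2) (fun h0 => ⟨0, by rw [h0]; norm_num⟩))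
        (fun hc => absurd hc (by simp))⟩
  else
    ⟨toLex (max 0 (min 1 r), false),
      mem_gammaCarrier (le_max_left 0 _) (max_le zero_le_one (min_le_left 1 r))
        (fun hc => absurd hc (by simp))
        (fun _ => lt_of_le_of_ne (le_max_left 0 _) (fun h0 => h (Or.inr h0.symm)))⟩

/-- `0°`, the bottom element of `Γ`. -/
noncomputable def gzero : Gamma := mk' 0 true
/-- `1°`, the top element of `Γ`. -/
noncomputable def gone : Gamma := mk' 1 true
/-- The section `ι° : [0,1] → Γ`, `r ↦ r°` for rational `r` and `r ↦ r⁻` otherwise. -/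
noncomputable def icircR (r : ℝ) : Gamma := mk' r true
/-- The section `ι⁻ : [0,1] → Γ`, `0 ↦ 0°` and `r ↦ r⁻` for `r > 0`. -/
noncomputable def iminusR (r : ℝ) : Gamma := mk' r false
/-- The exact value `q°` of a rational `q ∈ [0,1]`. -/
noncomputable def gq (q : ℚ) : Gamma := mk' (q : ℝ) true
/-- `ι°` as a map on the unit interval. -/
noncomputable def icirc (r : Set.Icc (0:ℝ) 1) : Gamma := icircR r.1
/-- `ι⁻` as a map on the unit interval. -/
noncomputable def iminusI (r : Set.Icc (0:ℝ) 1) : Gamma := iminusR r.1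
/-- `γ : Γ → [0,1]` as a map into the unit interval. -/
noncomputable def gmapI (x : Gamma) : Set.Icc (0:ℝ) 1 := ⟨γmap x, (gmem x).1, (gmem x).2.1⟩

/-- The partial subtraction `∸` on `Γ` (meaningful when `y ≤ x`):
`r° ∸ s° = (r−s)°`, `r⁻ ∸ s° = (r−s)⁻`, and `r* ∸ s⁻ = (r−s)°` if `r−s ∈ ℚ`,
`(r−s)⁻` otherwise. -/
noncomputable def gsub (x y : Gamma) : Gamma :=
  mk' (γmap x - γmap y)
    (if (gexact x ∧ gexact y) ∨ (¬ gexact y ∧ ∃ q : ℚ, (q : ℝ) = γmap x - γmap y)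
      then true else false)

/-- The second partial subtraction `∸̃` on `Γ` (meaningful when `y ≤ x`):
`x ∸̃ x = 0°` and, for `y < x`, `r° ∸̃ s° = r⁻ ∸̃ s⁻ = r⁻ ∸̃ s° = (r−s)⁻` and
`r° ∸̃ s⁻ = (r−s)°` if `r−s ∈ ℚ`, `(r−s)⁻` otherwise. -/
noncomputable def gsubt (x y : Gamma) : Gamma :=
  mk' (γmap x - γmap y)
    (if gexact x ∧ ¬ gexact y ∧ ∃ q : ℚ, (q : ℝ) = γmap x - γmap y then true else false)

/-- The partial addition `+` on `Γ` (meaningful when `x ≤ 1° ∸ y`):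
`r° + s° = (r+s)°` and any sum involving a `⁻`-argument is of `⁻`-type. -/
noncomputable def gadd (x y : Gamma) : Gamma :=
  mk' (γmap x + γmap y) (if gexact x ∧ gexact y then true else false)

/-- A `Γ`-valued (finitely additive, probability) measure on a bounded lattice. -/
def IsGMeasure {D : Type*} [Lattice D] [BoundedOrder D] (μ : D → Gamma) : Prop :=
  Monotone μ ∧ μ ⊥ = gzero ∧ μ ⊤ = gone ∧
  ∀ a b : D, gsubt (μ a) (μ (a ⊓ b)) ≤ gsub (μ (a ⊔ b)) (μ b) ∧
    gsubt (μ (a ⊔ b)) (μ b) ≤ gsub (μ a) (μ (a ⊓ b))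

/-!
The projection `γmap : Γ → [0,1]` is monotone and each of its fibres has at most two points,
`r⁻ < r°`. For nonempty `S` put `r = sup γ(S)`: the supremum of `S` is `r°` when that lies in `S`,
and `r⁻` otherwise, which exists because `r > 0` (the only point over `0` is `0°`). The empty set
has supremum `0°`, and infima are suprema of the sets of lower bounds.
-/

namespace Gamma

theorem le_iff {x y : Gamma} :
    x ≤ y ↔ γmap x < γmap y ∨ (γmap x = γmap y ∧ (ofLex x.1).2 ≤ (ofLex y.1).2) :=
  Prod.Lex.le_iff

theorem γmap_nonneg (x : Gamma) : 0 ≤ γmap x := (gmem x).1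

theorem γmap_le_one (x : Gamma) : γmap x ≤ 1 := (gmem x).2.1

theorem γmap_monotone : Monotone γmap := fun _ _ h =>
  (le_iff.1 h).elim le_of_lt fun h => h.1.le

theorem gexact_of_γmap_eq_zero {x : Gamma} (h : γmap x = 0) : gexact x := by
  by_contra hx
  exact ((gmem x).2.2.2 (by simpa [gexact] using hx)).ne' h

theorem le_of_γmap_lt {x y : Gamma} (h : γmap x < γmap y) : x ≤ y :=
  le_iff.2 (Or.inl h)

theorem le_of_γmap_le_of_gexact {x y : Gamma} (h : γmap x ≤ γmap y) (hy : gexact y) : x ≤ y :=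
  le_iff.2 (h.lt_or_eq.imp_right fun h => ⟨h, hy ▸ Bool.le_true _⟩)

theorem le_of_γmap_le_of_not_gexact {x y : Gamma} (h : γmap x ≤ γmap y) (hx : ¬gexact x) :
    x ≤ y :=
  le_iff.2 (h.lt_or_eq.imp_right fun h => ⟨h, by simp_all [gexact]⟩)

theorem isBot_gzero : IsBot gzero := by
  have hγ : γmap gzero = 0 := by simp [gzero, mk', γmap]
  intro y
  rcases (γmap_nonneg y).eq_or_lt with h | h
  · exact le_of_γmap_le_of_gexact (by rw [hγ, ← h]) (gexact_of_γmap_eq_zero h.symm)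
  · exact le_of_γmap_lt (hγ ▸ h)

def approx (r : ℝ) (h0 : 0 < r) (h1 : r ≤ 1) : Gamma :=
  ⟨toLex (r, false), mem_gammaCarrier h0.le h1 (by simp) fun _ => h0⟩

theorem isLUB_approx {S : Set Gamma} {r : ℝ} (h0 : 0 < r) (h1 : r ≤ 1)
    (hle : ∀ y ∈ S, γmap y < r ∨ (γmap y = r ∧ ¬gexact y))
    (hleast : ∀ u ∈ upperBounds S, r ≤ γmap u) : IsLUB S (approx r h0 h1) := by
  have happrox : ¬gexact (approx r h0 h1) := by simp [gexact, approx]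
  refine ⟨fun y hy => ?_, fun u hu => le_of_γmap_le_of_not_gexact (hleast u hu) happrox⟩
  rcases hle y hy with h | ⟨h, hy⟩
  · exact le_of_γmap_lt h
  · exact le_of_γmap_le_of_not_gexact h.le hy

theorem exists_isLUB (S : Set Gamma) : ∃ x, IsLUB S x := by
  rcases S.eq_empty_or_nonempty with rfl | hne
  · exact ⟨gzero, isLUB_empty_iff.2 isBot_gzero⟩
  set r := sSup (γmap '' S)
  have hbdd : BddAbove (γmap '' S) := ⟨1, Set.forall_mem_image.2 fun x _ => γmap_le_one x⟩
  have hub (y) (hy : y ∈ S) : γmap y ≤ r := le_csSup hbdd (Set.mem_image_of_mem _ hy)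
  have hleast (u) (hu : u ∈ upperBounds S) : r ≤ γmap u :=
    csSup_le (hne.image _) (Set.forall_mem_image.2 fun y hy => γmap_monotone (hu hy))
  by_cases hattained : ∃ x ∈ S, γmap x = r ∧ gexact x
  · obtain ⟨x, hxS, hxr, hx⟩ := hattained
    exact ⟨x, IsGreatest.isLUB ⟨hxS, fun y hy => le_of_γmap_le_of_gexact (hxr ▸ hub y hy) hx⟩⟩
  push Not at hattained
  obtain ⟨x₀, hx₀⟩ := hne
  have hr0 : 0 < r := by
    refine ((γmap_nonneg x₀).trans (hub x₀ hx₀)).lt_of_ne fun h => ?_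
    have hx₀0 : γmap x₀ = 0 := le_antisymm (h ▸ hub x₀ hx₀) (γmap_nonneg x₀)
    exact hattained x₀ hx₀ (hx₀0.trans h) (gexact_of_γmap_eq_zero hx₀0)
  have hr1 : r ≤ 1 := csSup_le ⟨_, x₀, hx₀, rfl⟩ (Set.forall_mem_image.2 fun x _ => γmap_le_one x)
  exact ⟨approx r hr0 hr1, isLUB_approx hr0 hr1
    (fun y hy => (hub y hy).lt_or_eq.imp_right fun h => ⟨h, hattained y hy h⟩) hleast⟩

end Gamma

/-- `Γ` (with its total order, `0°` at the bottom) is a complete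
lattice: every subset has a least upper bound and a greatest lower bound. -/
theorem stmt_2 : ∀ S : Set Gamma, (∃ x, IsLUB S x) ∧ (∃ x, IsGLB S x) := fun S =>
  ⟨Gamma.exists_isLUB S,
    (Gamma.exists_isLUB (lowerBounds S)).imp fun _ => isLUB_lowerBounds.1⟩
end

section
/- The map γ : Γ → [0,1] defined by γ(r⁻) = r and γ(q°) = q is monotone and surjective, and the map ι° : [0,1] → Γ defined by ι°(r) = r° if r is rational and ι°(r) = r⁻ otherwise is its right adjoint: for all y ∈ Γ and x ∈ [0,1], γ(y) ≤ x iff y ≤ ι°(x). -/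
open scoped Classical

/-! Since `Γ` is ordered lexicographically by the value `γ` and then by exactness, the fibre of
`γ` over `x` has `ι°(x)` as its largest element: it is exact whenever `x` is rational, and only
rational values carry exact elements at all. -/

lemma le_iff_γmap (y z : Gamma) : y ≤ z ↔
    γmap y < γmap z ∨ (γmap y = γmap z ∧ (ofLex y.1).2 ≤ (ofLex z.1).2) :=
  Subtype.coe_le_coe.symm.trans Prod.Lex.le_iff

lemma γmap_mono : Monotone γmap := fun y z h => by
  rcases (le_iff_γmap y z).1 h with h | ⟨h, -⟩
  exacts [h.le, h.le]

lemma γmap_icirc (x : Set.Icc (0:ℝ) 1) : γmap (icirc x) = x := by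
  unfold icirc icircR mk' γmap
  split <;> simp [min_eq_right x.2.2, max_eq_right x.2.1]

lemma leftInverse_gmapI_icirc : Function.LeftInverse gmapI icirc := fun x =>
  Subtype.ext (γmap_icirc x)

lemma gexact_icirc {x : Set.Icc (0:ℝ) 1} (hx : ∃ q : ℚ, (q : ℝ) = x) : gexact (icirc x) := by
  unfold gexact icirc icircR mk'
  rw [dif_pos (Or.inl ⟨rfl, by rwa [min_eq_right x.2.2, max_eq_right x.2.1]⟩)]
  rfl

lemma galoisConnection_gmapI_icirc : GaloisConnection gmapI icirc := by
  intro y x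
  refine ⟨fun h => (le_iff_γmap _ _).2 ?_, fun h => ?_⟩
  · rw [γmap_icirc]
    rcases (Subtype.mk_le_mk.1 h).lt_or_eq with hlt | heq
    · exact Or.inl hlt
    · refine Or.inr ⟨heq, ?_⟩
      cases hy : (ofLex y.1).2
      · exact Bool.false_le _
      · have hx : ∃ q : ℚ, (q : ℝ) = x := heq ▸ (gmem y).2.2.1 hy
        exact (gexact_icirc hx).ge
  · exact Subtype.mk_le_mk.2 ((γmap_mono h).trans_eq (γmap_icirc x))

/-- `γ : Γ → [0,1]` is monotone and surjective, and
`ι° : [0,1] → Γ` is its right adjoint: `γ(y) ≤ x` iff `y ≤ ι°(x)`. -/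
theorem stmt_3 :
    Monotone gmapI ∧ Function.Surjective gmapI ∧
    ∀ (y : Gamma) (x : Set.Icc (0:ℝ) 1), gmapI y ≤ x ↔ y ≤ icirc x :=
  ⟨galoisConnection_gmapI_icirc.monotone_l, leftInverse_gmapI_icirc.surjective,
    galoisConnection_gmapI_icirc⟩
end

section
/- Define the partial addition + on Γ by r° + s° = (r+s)°, r⁻ + s° = r° + s⁻ = r⁻ + s⁻ = (r+s)⁻, defined whenever x ≤ 1° ∸ y. Then for every x ∈ Γ, the map (−) + x : [0°, 1° ∸ x] → [x, 1°] is left adjoint to (−) ∸ x : [x, 1°] → [0°, 1° ∸ x]: that is, y + x ≤ z iff y ≤ z ∸ x. -/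
open scoped Classical

/-! `Γ` is ordered lexicographically by the value `γ` and then by exactness, and on values
`+ x` and `∸ x` are the mutually inverse maps `b ↦ b + γ x` and `c ↦ c - γ x`. So the two
comparisons agree unless `γ y + γ x = γ z`, where they come down to exactness: `y + x` is exact
iff `y` and `x` are, while `z ∸ x` is exact iff `z` and `x` are or `x` is inexact and
`γ z - γ x = γ y` is rational, which holds whenever `y` is exact. -/

theorem le_iff_γmap_gexact (u v : Gamma) :
    u ≤ v ↔ γmap u < γmap v ∨ (γmap u = γmap v ∧ (gexact u → gexact v)) := by
  change u.1 ≤ v.1 ↔ _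
  rw [Prod.Lex.le_iff, Bool.le_iff_imp]
  rfl

theorem γmap_nonneg (x : Gamma) : 0 ≤ γmap x := (gmem x).1

theorem γmap_le_one (x : Gamma) : γmap x ≤ 1 := (gmem x).2.1

theorem exists_rat_eq_γmap_of_gexact {x : Gamma} (h : gexact x) : ∃ q : ℚ, (q : ℝ) = γmap x :=
  (gmem x).2.2.1 h

theorem γmap_pos_of_not_gexact {x : Gamma} (h : ¬ gexact x) : 0 < γmap x :=
  (gmem x).2.2.2 (Bool.eq_false_iff.2 h)

theorem gexact_of_γmap_eq_zero {x : Gamma} (h : γmap x = 0) : gexact x :=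
  not_not.1 fun hx => (γmap_pos_of_not_gexact hx).ne' h

theorem γmap_le_γmap {u v : Gamma} (h : u ≤ v) : γmap u ≤ γmap v := by
  rcases (le_iff_γmap_gexact u v).1 h with h | ⟨h, -⟩
  exacts [h.le, h.le]

theorem gexact_of_le_of_γmap_eq {u v : Gamma} (h : u ≤ v) (he : γmap u = γmap v)
    (hu : gexact u) : gexact v := by
  rcases (le_iff_γmap_gexact u v).1 h with h | ⟨-, h⟩
  exacts [absurd he h.ne, h hu]

section mk'

variable {r : ℝ} (e : Bool)

theorem γmap_mk' (h0 : 0 ≤ r) (h1 : r ≤ 1) : γmap (mk' r e) = r := by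
  unfold mk' γmap
  split_ifs <;> simp [min_eq_right h1, max_eq_right h0]

theorem gexact_mk' (h0 : 0 ≤ r) (h1 : r ≤ 1) :
    gexact (mk' r e) ↔ (e = true ∧ ∃ q : ℚ, (q : ℝ) = r) ∨ r = 0 := by
  unfold mk' gexact
  split_ifs with h <;> simpa [min_eq_right h1, max_eq_right h0] using h

end mk'

theorem γmap_gone : γmap gone = 1 := γmap_mk' true zero_le_one le_rfl

theorem le_gone (x : Gamma) : x ≤ gone := by
  refine (le_iff_γmap_gexact x gone).2 ?_
  rw [γmap_gone]
  rcases (γmap_le_one x).lt_or_eq with h | h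
  · exact Or.inl h
  · exact Or.inr ⟨h, fun _ => (gexact_mk' true zero_le_one le_rfl).2 (Or.inl ⟨rfl, 1, by simp⟩)⟩

section arith

variable {x y z : Gamma}

theorem γmap_gadd (h : γmap y + γmap x ≤ 1) : γmap (gadd y x) = γmap y + γmap x :=
  γmap_mk' _ (add_nonneg (γmap_nonneg y) (γmap_nonneg x)) h

theorem gexact_gadd (h : γmap y + γmap x ≤ 1) : gexact (gadd y x) ↔ gexact y ∧ gexact x := by
  rw [gadd, gexact_mk' _ (add_nonneg (γmap_nonneg y) (γmap_nonneg x)) h]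
  simp only [Bool.if_false_right, Bool.and_true, decide_eq_true_eq]
  constructor
  · rintro (⟨hyx, -⟩ | h0)
    · exact hyx
    · obtain ⟨hy0, hx0⟩ := (add_eq_zero_iff_of_nonneg (γmap_nonneg y) (γmap_nonneg x)).1 h0
      exact ⟨gexact_of_γmap_eq_zero hy0, gexact_of_γmap_eq_zero hx0⟩
  · rintro ⟨hy, hx⟩
    obtain ⟨p, hp⟩ := exists_rat_eq_γmap_of_gexact hy
    obtain ⟨q, hq⟩ := exists_rat_eq_γmap_of_gexact hx
    exact Or.inl ⟨⟨hy, hx⟩, p + q, by push_cast; rw [hp, hq]⟩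

theorem γmap_gsub (h : x ≤ z) : γmap (gsub z x) = γmap z - γmap x :=
  γmap_mk' _ (sub_nonneg.2 (γmap_le_γmap h)) (by linarith [γmap_le_one z, γmap_nonneg x])

theorem gexact_gsub (h : x ≤ z) : gexact (gsub z x) ↔
    (gexact z ∧ gexact x) ∨ (¬ gexact x ∧ ∃ q : ℚ, (q : ℝ) = γmap z - γmap x) := by
  rw [gsub, gexact_mk' _ (sub_nonneg.2 (γmap_le_γmap h)) (by linarith [γmap_le_one z, γmap_nonneg x])]
  simp only [Bool.if_false_right, Bool.and_true, decide_eq_true_eq]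
  constructor
  · rintro (⟨hexact, -⟩ | h0)
    · exact hexact
    · by_cases hx : gexact x
      · exact Or.inl ⟨gexact_of_le_of_γmap_eq h (sub_eq_zero.1 h0).symm hx, hx⟩
      · exact Or.inr ⟨hx, 0, by rw [h0, Rat.cast_zero]⟩
  · intro hexact
    refine Or.inl ⟨hexact, ?_⟩
    rcases hexact with ⟨hz, hx⟩ | ⟨-, hrat⟩
    · obtain ⟨p, hp⟩ := exists_rat_eq_γmap_of_gexact hz
      obtain ⟨q, hq⟩ := exists_rat_eq_γmap_of_gexact hx
      exact ⟨p - q, by push_cast; rw [hp, hq]⟩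
    · exact hrat

end arith

theorem stmt_7_general (x y z : Gamma) (hy : y ≤ gsub gone x)
    (hzx : x ≤ z) :
    gadd y x ≤ z ↔ y ≤ gsub z x := by
  have hyx : γmap y + γmap x ≤ 1 := by
    have := γmap_le_γmap hy
    rw [γmap_gsub (le_gone x), γmap_gone] at this
    linarith
  rw [le_iff_γmap_gexact, le_iff_γmap_gexact, γmap_gadd hyx, γmap_gsub hzx, gexact_gadd hyx,
    gexact_gsub hzx, lt_sub_iff_add_lt, eq_sub_iff_add_eq]
  refine or_congr_right (and_congr_right fun h => ?_)
  rw [← h, add_sub_cancel_right]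
  by_cases hx : gexact x
  · simp [hx]
  · simpa [hx] using exists_rat_eq_γmap_of_gexact

/-- for every `x ∈ Γ`, the partial addition `(−) + x` on the
interval `[0°, 1° ∸ x]` is left adjoint to `(−) ∸ x` on `[x, 1°]`:
`y + x ≤ z` iff `y ≤ z ∸ x`. -/
theorem stmt_7 (x y z : Gamma) (hy0 : gzero ≤ y) (hy : y ≤ gsub gone x)
    (hzx : x ≤ z) (hz1 : z ≤ gone) :
    gadd y x ≤ z ↔ y ≤ gsub z x :=
  stmt_7_general x y z hy hzx
end
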